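/- The partially ordered type D∞ is itself a dcpo: every nonempty directed subset A of D∞ has a least upper bound, and this least upper bound is computed pointwise, i.e., its component at each index i is the least upper bound in D i of the set { σ i | σ ∈ A }. -/

import Mathlib

/-- A partial order is a dcpo if every nonempty directed subset has a least upper bound. -/
def IsDcpo (α : Type*) [Preorder α] : Prop :=
  ∀ d : Set α, d.Nonempty → DirectedOn (· ≤ ·) d → ∃ a, IsLUB d a

/-- The limit `D∞` of a system of projections: dependent functions `σ : Π i, D i`
with `π i j h (σ j) = σ i` whenever `i ≤ j`, ordered pointwise (as a subtype of `Π i, D i`). -/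
abbrev Dinf {I : Type*} [Preorder I] (D : I → Type*) [∀ i, PartialOrder (D i)]
    (π : ∀ i j : I, i ≤ j → D j → D i) : Type _ :=
  {σ : ∀ i, D i // ∀ (i j : I) (h : i ≤ j), π i j h (σ j) = σ i}

/-!
The components `{τ i | τ ∈ A}` of a directed set `A ⊆ D∞` are directed, and `π i j` maps the
`j`-th of them onto the `i`-th. Scott continuity of `π i j` therefore carries the least upper
bound at `j` to the one at `i`: the pointwise least upper bounds are compatible, hence form an
element of `D∞`, and a pointwise least upper bound is a least upper bound for the pointwise order.
-/

namespace Dinf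

variable {I : Type*} [Preorder I] {D : I → Type*} [∀ i, PartialOrder (D i)]
  {π : ∀ i j : I, i ≤ j → D j → D i}

lemma directedOn_image_eval {A : Set (Dinf D π)} (hA : DirectedOn (· ≤ ·) A) (i : I) :
    DirectedOn (· ≤ ·) ((fun τ : Dinf D π => τ.1 i) '' A) :=
  hA.mono_comp fun _ _ h => h i

lemma proj_image_image_eval (A : Set (Dinf D π)) {i j : I} (h : i ≤ j) :
    π i j h '' ((fun τ : Dinf D π => τ.1 j) '' A) = (fun τ : Dinf D π => τ.1 i) '' A := by
  rw [Set.image_image]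
  exact Set.image_congr fun τ _ => τ.2 i j h

lemma proj_eq_of_isLUB_image_eval (hπc : ∀ (i j : I) (h : i ≤ j), ScottContinuous (π i j h))
    {A : Set (Dinf D π)} (hne : A.Nonempty) (hdir : DirectedOn (· ≤ ·) A) {s : ∀ i, D i}
    (hs : ∀ i, IsLUB ((fun τ : Dinf D π => τ.1 i) '' A) (s i)) (i j : I) (h : i ≤ j) :
    π i j h (s j) = s i := by
  have hlub := hπc i j h (hne.image _) (directedOn_image_eval hdir j) (hs j)
  rw [proj_image_image_eval A h] at hlub
  exact hlub.unique (hs i)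

lemma isLUB_of_isLUB_image_eval {A : Set (Dinf D π)} {σ : Dinf D π}
    (h : ∀ i, IsLUB ((fun τ : Dinf D π => τ.1 i) '' A) (σ.1 i)) : IsLUB A σ :=
  IsLUB.of_image Subtype.coe_le_coe <| isLUB_pi.2 fun i => by rw [Set.image_image]; exact h i

end Dinf

theorem Dinf_isDcpo_pointwise_general {I : Type*} [Preorder I] {D : I → Type*}
    [∀ i, PartialOrder (D i)]
    (hD : ∀ i, IsDcpo (D i))
    (π : ∀ i j : I, i ≤ j → D j → D i)
    (hπc : ∀ (i j : I) (h : i ≤ j), ScottContinuous (π i j h)) :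
    ∀ A : Set (Dinf D π), A.Nonempty → DirectedOn (· ≤ ·) A →
      ∃ σ : Dinf D π, IsLUB A σ ∧
        ∀ i : I, IsLUB ((fun τ : Dinf D π => τ.1 i) '' A) (σ.1 i) := by
  intro A hne hdir
  choose s hs using fun i => hD i _ (hne.image _) (Dinf.directedOn_image_eval hdir i)
  let σ : Dinf D π := ⟨s, Dinf.proj_eq_of_isLUB_image_eval hπc hne hdir hs⟩
  exact ⟨σ, Dinf.isLUB_of_isLUB_image_eval hs, hs⟩

/-- `D∞` is a dcpo, with least upper bounds of nonempty directed subsets computed pointwise: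
the component at each index `i` of the least upper bound of `A` is the least upper bound
in `D i` of `{ σ i | σ ∈ A }`. -/
theorem Dinf_isDcpo_pointwise {I : Type*} [Preorder I] {D : I → Type*}
    [∀ i, PartialOrder (D i)]
    (hD : ∀ i, IsDcpo (D i))
    (ε : ∀ i j : I, i ≤ j → D i → D j) (π : ∀ i j : I, i ≤ j → D j → D i)
    (hεc : ∀ (i j : I) (h : i ≤ j), ScottContinuous (ε i j h))
    (hπc : ∀ (i j : I) (h : i ≤ j), ScottContinuous (π i j h))
    (hsec : ∀ (i j : I) (h : i ≤ j) (x : D i), π i j h (ε i j h x) = x)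
    (hdefl : ∀ (i j : I) (h : i ≤ j) (y : D j), ε i j h (π i j h y) ≤ y)
    (hεid : ∀ (i : I) (h : i ≤ i), ε i i h = id)
    (hπid : ∀ (i : I) (h : i ≤ i), π i i h = id)
    (hεcomp : ∀ (i j k : I) (hij : i ≤ j) (hjk : j ≤ k),
      ε i k (hij.trans hjk) = ε j k hjk ∘ ε i j hij)
    (hπcomp : ∀ (i j k : I) (hij : i ≤ j) (hjk : j ≤ k),
      π i k (hij.trans hjk) = π i j hij ∘ π j k hjk) :
    ∀ A : Set (Dinf D π), A.Nonempty → DirectedOn (· ≤ ·) A →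
      ∃ σ : Dinf D π, IsLUB A σ ∧
        ∀ i : I, IsLUB ((fun τ : Dinf D π => τ.1 i) '' A) (σ.1 i) :=
  Dinf_isDcpo_pointwise_general hD π hπc
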